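/- The Hamiltonian functions H₁(x,y,u,v) = (2/3)·f(y³(u²+v²)) and H₂(x,y,u,v) = 2(x/y)(1 − f(y³(u²+v²))) are in involution with respect to ω_f: at every point with y > 0, ω_f(X₁, V₂) = X₁ᵀ·Ω_f·V₂ = 0, where X₁ = (0, 0, −v, u) and V₂ = (2x, 2y, −3u, −3v) are their Hamiltonian vector fields. -/
import Mathlib


open Matrix

/-- The coefficient matrix `Ω_f(x,y,u,v)` of the 2-form `ω_f` on
`ℍ²×ℂ ≅ {(x,y,u,v) : y > 0}`, where `f, f′` are evaluated at `t = y³(u²+v²)`. -/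
noncomputable def Omf (f : ℝ → ℝ) (x y u v : ℝ) : Matrix (Fin 4) (Fin 4) ℝ :=
  let F := f (y ^ 3 * (u ^ 2 + v ^ 2))
  let F' := deriv f (y ^ 3 * (u ^ 2 + v ^ 2))
  !![0, (-1 + F - 3 * F' * y ^ 3 * (u ^ 2 + v ^ 2)) / y ^ 2, -2 * y ^ 2 * F' * u,
       -2 * y ^ 2 * F' * v;
     -((-1 + F - 3 * F' * y ^ 3 * (u ^ 2 + v ^ 2)) / y ^ 2), 0, 2 * y ^ 2 * F' * v,
       -2 * y ^ 2 * F' * u;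
     -(-2 * y ^ 2 * F' * u), -(2 * y ^ 2 * F' * v), 0, -(4 / 3) * F' * y ^ 3;
     -(-2 * y ^ 2 * F' * v), -(-2 * y ^ 2 * F' * u), -(-(4 / 3) * F' * y ^ 3), 0]


/-- The Hamiltonian functions `H₁` and `H₂` are in involution:
`ω_f(X₁, V₂) = X₁ᵀ·Ω_f·V₂ = 0`, where `X₁ = (0,0,−v,u)` and
`V₂ = (2x,2y,−3u,−3v)` are their Hamiltonian vector fields. -/
theorem stmt12 (f : ℝ → ℝ) (hf : ContDiff ℝ (⊤ : ℕ∞) f) :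
    ∀ x y u v : ℝ, 0 < y →
      (![0, 0, -v, u] : Fin 4 → ℝ) ⬝ᵥ
        (Omf f x y u v).mulVec ![2 * x, 2 * y, -3 * u, -3 * v] = 0 := by
  intro x y u v hy
  simp [Omf, mulVec, dotProduct, Fin.sum_univ_four]
  ring
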